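/- arXiv:2006.16672 — 7 statements merged into one kernel-verified Lean document; each statement's English description precedes it below -/
import Mathlib

section
/- For a < b, 1/2 < α < 1, and fixed x ∈ (a, b), the partial derivative in t of K(x,t) for a < t < x satisfies ∂K(x,t)/∂t = ((1-α)/Γ(α)²) ∫_x^b (s-x)^{α-1}(s-t)^{α-2} ds > 0; in particular, t ↦ K(x,t) is strictly increasing on (a, x). -/
open Real MeasureTheory Set intervalIntegral

/-- Kernel `K(x,t) = (1/Γ(α)²) ∫_{max{x,t}}^{b} (s-x)^{α-1}(s-t)^{α-1} ds`. -/
noncomputable def K (b α x t : ℝ) : ℝ :=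
  (1 / Real.Gamma α ^ 2) * ∫ s in max x t..b, (s - x) ^ (α - 1) * (s - t) ^ (α - 1)

/-- Green's function `G(x,t) = K(x,t) - K(a,t)K(x,a)/K(a,a)`. -/
noncomputable def G (a b α x t : ℝ) : ℝ :=
  K b α x t - K b α a t * K b α x a / K b α a a

/-!
Differentiate under the integral sign: for `τ` within `ε = (x - t) / 2` of `t < x`, the
`τ`-derivative `(1 - α) (s - τ) ^ (α - 2)` of the second factor is bounded on `[x, b]` by
`(1 - α) ε ^ (α - 2)`, while `(s - x) ^ (α - 1)` is integrable because `α - 1 > -1`. The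
derivative is then the integral of a positive function, so `K b α x` increases strictly on `(a, x)`.
-/

lemma intervalIntegrable_sub_rpow {x b r : ℝ} (hr : -1 < r) :
    IntervalIntegrable (fun s : ℝ => (s - x) ^ r) volume x b := by
  simpa using (intervalIntegrable_rpow' hr (a := x - x) (b := b - x)).comp_sub_right x

lemma continuousOn_sub_rpow {x b τ p : ℝ} (hxb : x ≤ b) (hτ : τ < x) :
    ContinuousOn (fun s : ℝ => (s - τ) ^ p) (uIcc x b) := by
  refine ContinuousOn.rpow_const (by fun_prop) fun s hs => Or.inl ?_
  rw [uIcc_of_le hxb] at hs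
  linarith [hs.1]

lemma hasDerivAt_integral_mul_sub_rpow {f : ℝ → ℝ} {x b p t : ℝ}
    (hf : IntervalIntegrable f volume x b) (hp : p ≤ 1) (hxb : x ≤ b) (htx : t < x) :
    HasDerivAt (fun τ => ∫ s in x..b, f s * (s - τ) ^ p)
      (-p * ∫ s in x..b, f s * (s - t) ^ (p - 1)) t := by
  set ε := (x - t) / 2
  have hε : 0 < ε := by simp only [ε]; linarith
  have hball : ∀ τ ∈ Metric.ball t ε, τ < x := fun τ hτ => by
    rw [Metric.mem_ball, dist_eq, abs_lt] at hτ
    simp only [ε] at hτ; linarith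
  have hgap : ∀ s ∈ uIoc x b, ∀ τ ∈ Metric.ball t ε, ε ≤ s - τ := fun s hs τ hτ => by
    rw [uIoc_of_le hxb] at hs
    rw [Metric.mem_ball, dist_eq, abs_lt] at hτ
    simp only [ε] at hτ ⊢; linarith [hs.1]
  have hint : ∀ q : ℝ, ∀ τ ∈ Metric.ball t ε,
      IntervalIntegrable (fun s => f s * (s - τ) ^ q) volume x b := fun q τ hτ =>
    hf.mul_continuousOn (continuousOn_sub_rpow hxb (hball τ hτ))
  have key := hasDerivAt_integral_of_dominated_loc_of_deriv_le
    (F := fun τ s => f s * (s - τ) ^ p) (F' := fun τ s => f s * (-p * (s - τ) ^ (p - 1)))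
    (bound := fun s => ‖f s‖ * (‖p‖ * ε ^ (p - 1))) (Metric.ball_mem_nhds t hε)
    (Filter.eventually_of_mem (Metric.ball_mem_nhds t hε) fun τ hτ =>
      (hint p τ hτ).def'.aestronglyMeasurable)
    (hint p t (Metric.mem_ball_self hε))
    (((hint (p - 1) t (Metric.mem_ball_self hε)).const_mul (-p)).def'.aestronglyMeasurable.congr
      (Filter.Eventually.of_forall fun s => by simp only; ring))
    (Filter.Eventually.of_forall fun s hs τ hτ => by
      have hsτ := hgap s hs τ hτ
      rw [norm_mul, norm_mul, norm_neg, Real.norm_of_nonneg (rpow_nonneg (hε.le.trans hsτ) _)]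
      exact mul_le_mul_of_nonneg_left (mul_le_mul_of_nonneg_left
        (rpow_le_rpow_of_nonpos hε hsτ (by linarith)) (norm_nonneg p)) (norm_nonneg _))
    (hf.norm.mul_const _)
    (Filter.Eventually.of_forall fun s hs τ hτ => by
      have hsτ : s - τ ≠ 0 := (hε.trans_le (hgap s hs τ hτ)).ne'
      have := (((hasDerivAt_id' τ).const_sub s).rpow_const (p := p) (Or.inl hsτ)).const_mul (f s)
      exact this.congr_deriv (by ring))
  refine key.2.congr_deriv ?_
  rw [← intervalIntegral.integral_const_mul]
  exact integral_congr fun s _ => by ring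

lemma integral_sub_rpow_mul_sub_rpow_pos {x b t q r : ℝ} (hq : -1 < q) (hxb : x < b)
    (htx : t < x) : 0 < ∫ s in x..b, (s - x) ^ q * (s - t) ^ r := by
  refine intervalIntegral_pos_of_pos_on ((intervalIntegrable_sub_rpow hq).mul_continuousOn
    (continuousOn_sub_rpow hxb.le htx)) (fun s hs => ?_) hxb
  have h₁ : 0 < s - x := by linarith [hs.1]
  have h₂ : 0 < s - t := by linarith [hs.1]
  positivity

lemma K_of_le {b α x t : ℝ} (htx : t ≤ x) :
    K b α x t = 1 / Gamma α ^ 2 * ∫ s in x..b, (s - x) ^ (α - 1) * (s - t) ^ (α - 1) := by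
  rw [K, max_eq_left htx]

theorem K_deriv_t_pos_general (a b α : ℝ) (hα₁ : 1 / 2 < α) (hα₂ : α < 1)
    (x : ℝ) (hx : x ∈ Set.Ioo a b) :
    (∀ t ∈ Set.Ioo a x,
        HasDerivAt (fun τ => K b α x τ)
          ((1 - α) / Real.Gamma α ^ 2 *
            ∫ s in x..b, (s - x) ^ (α - 1) * (s - t) ^ (α - 2)) t ∧
        0 < (1 - α) / Real.Gamma α ^ 2 *
              ∫ s in x..b, (s - x) ^ (α - 1) * (s - t) ^ (α - 2)) ∧
      StrictMonoOn (fun t => K b α x t) (Set.Ioo a x) := by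
  have hderiv : ∀ t ∈ Ioo a x, HasDerivAt (fun τ => K b α x τ)
      ((1 - α) / Gamma α ^ 2 * ∫ s in x..b, (s - x) ^ (α - 1) * (s - t) ^ (α - 2)) t := by
    intro t ht
    have h := (hasDerivAt_integral_mul_sub_rpow (p := α - 1) (intervalIntegrable_sub_rpow
      (by linarith : -1 < α - 1)) (by linarith) hx.2.le ht.2).const_mul (1 / Gamma α ^ 2)
    refine (h.congr_of_eventuallyEq ?_).congr_deriv ?_
    · filter_upwards [Iio_mem_nhds ht.2] with τ hτ using K_of_le hτ.le
    · rw [show α - 1 - 1 = α - 2 by ring]; ring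
  have hpos : ∀ t ∈ Ioo a x,
      0 < (1 - α) / Gamma α ^ 2 * ∫ s in x..b, (s - x) ^ (α - 1) * (s - t) ^ (α - 2) := by
    intro t ht
    have := Gamma_pos_of_pos (by linarith : 0 < α)
    have := integral_sub_rpow_mul_sub_rpow_pos (r := α - 2) (by linarith : -1 < α - 1) hx.2 ht.2
    have : 0 < 1 - α := by linarith
    positivity
  refine ⟨fun t ht => ⟨hderiv t ht, hpos t ht⟩, ?_⟩
  refine strictMonoOn_of_hasDerivWithinAt_pos (convex_Ioo a x)
    (fun t ht => (hderiv t ht).continuousAt.continuousWithinAt) ?_ (by rwa [interior_Ioo])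
  rw [interior_Ioo]
  exact fun t ht => (hderiv t ht).hasDerivWithinAt

/-- ∂K(x,t)/∂t = ((1-α)/Γ(α)²) ∫_x^b (s-x)^(α-1)(s-t)^(α-2) ds > 0 for
a < t < x < b, hence t ↦ K(x,t) is strictly increasing on (a,x). -/
theorem K_deriv_t_pos (a b α : ℝ) (hab : a < b) (hα₁ : 1 / 2 < α) (hα₂ : α < 1)
    (x : ℝ) (hx : x ∈ Set.Ioo a b) :
    (∀ t ∈ Set.Ioo a x,
        HasDerivAt (fun τ => K b α x τ)
          ((1 - α) / Real.Gamma α ^ 2 *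
            ∫ s in x..b, (s - x) ^ (α - 1) * (s - t) ^ (α - 2)) t ∧
        0 < (1 - α) / Real.Gamma α ^ 2 *
              ∫ s in x..b, (s - x) ^ (α - 1) * (s - t) ^ (α - 2)) ∧
      StrictMonoOn (fun t => K b α x t) (Set.Ioo a x) :=
  K_deriv_t_pos_general a b α hα₁ hα₂ x hx
end

section
/- For a < b, 1/2 < α < 1, and a < t < b, the kernel satisfies the integration-by-parts identity K(a,t) = (1/(αΓ(α)²)) (b-a)^{α-1}(b-t)^{α} + ((1-α)/(αΓ(α)²)) ∫_t^b (s-a)^{α-2}(s-t)^{α} ds. -/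
open Real MeasureTheory Set

open intervalIntegral

/- Integration by parts against `v s = (s - t) ^ α / α`; the boundary term at `t` vanishes
because `α > 0`, and `v' = (s - t) ^ (α - 1)` is integrable at `t` for the same reason. -/
theorem integral_sub_rpow_mul_sub_rpow_sub_one {a t b α β : ℝ} (hat : a < t) (htb : t ≤ b)
    (hα : 0 < α) :
    ∫ s in t..b, (s - a) ^ β * (s - t) ^ (α - 1) =
      (b - a) ^ β * (b - t) ^ α / α - β / α * ∫ s in t..b, (s - a) ^ (β - 1) * (s - t) ^ α := by
  have hsa : ∀ s ∈ uIcc t b, s - a ≠ 0 := fun s hs => by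
    rw [uIcc_of_le htb] at hs; linarith [hs.1]
  have hu : ContinuousOn (fun s => (s - a) ^ β) (uIcc t b) :=
    (continuousOn_id.sub continuousOn_const).rpow_const fun s hs => .inl (hsa s hs)
  have hv : ContinuousOn (fun s => (s - t) ^ α / α) (uIcc t b) :=
    ((continuousOn_id.sub continuousOn_const).rpow_const fun _ _ => .inr hα.le).div_const α
  have hu' : ∀ s ∈ Ioo (min t b) (max t b),
      HasDerivWithinAt (fun s => (s - a) ^ β) (β * (s - a) ^ (β - 1)) (Ioi s) s := fun s hs => by
    simpa using (((hasDerivAt_id s).sub_const a).rpow_const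
      (.inl (hsa s (Ioo_subset_Icc_self hs)))).hasDerivWithinAt
  have hv' : ∀ s ∈ Ioo (min t b) (max t b),
      HasDerivWithinAt (fun s => (s - t) ^ α / α) ((s - t) ^ (α - 1)) (Ioi s) s := fun s hs => by
    have hts : t < s := by rw [min_eq_left htb] at hs; exact hs.1
    simpa [mul_div_cancel_left₀ _ hα.ne'] using ((((hasDerivAt_id s).sub_const t).rpow_const
      (p := α) (.inl (sub_pos.2 hts).ne')).div_const α).hasDerivWithinAt (s := Ioi s)
  have hu'_int : IntervalIntegrable (fun s => β * (s - a) ^ (β - 1)) volume t b :=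
    (continuousOn_const.mul ((continuousOn_id.sub continuousOn_const).rpow_const
      fun s hs => .inl (hsa s hs))).intervalIntegrable
  have hv'_int : IntervalIntegrable (fun s => (s - t) ^ (α - 1)) volume t b := by
    simpa using (intervalIntegrable_rpow' (r := α - 1) (a := 0) (b := b - t)
      (by linarith)).comp_sub_right t
  rw [integral_mul_deriv_eq_deriv_mul_of_hasDeriv_right hu hv hu' hv' hu'_int hv'_int]
  simp only [sub_self, zero_rpow hα.ne', zero_div, mul_zero, sub_zero]
  rw [← intervalIntegral.integral_const_mul]
  congr 1
  · ring
  · congr 1; ext s; ring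

theorem K_a_t_ibp_general (a b α : ℝ) (hα₁ : 1 / 2 < α)
    (t : ℝ) (ht : t ∈ Set.Ioo a b) :
    K b α a t =
      1 / (α * Real.Gamma α ^ 2) * ((b - a) ^ (α - 1) * (b - t) ^ α) +
        (1 - α) / (α * Real.Gamma α ^ 2) * ∫ s in t..b, (s - a) ^ (α - 2) * (s - t) ^ α := by
  have hα : 0 < α := by linarith
  have hΓ : Real.Gamma α ≠ 0 := (Real.Gamma_pos_of_pos hα).ne'
  rw [K, max_eq_right ht.1.le, integral_sub_rpow_mul_sub_rpow_sub_one ht.1 ht.2.le hα,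
    show α - 1 - 1 = α - 2 by ring]
  field_simp
  ring

/-- integration-by-parts identity for K(a,t). -/
theorem K_a_t_ibp (a b α : ℝ) (hab : a < b) (hα₁ : 1 / 2 < α) (hα₂ : α < 1)
    (t : ℝ) (ht : t ∈ Set.Ioo a b) :
    K b α a t =
      1 / (α * Real.Gamma α ^ 2) * ((b - a) ^ (α - 1) * (b - t) ^ α) +
        (1 - α) / (α * Real.Gamma α ^ 2) * ∫ s in t..b, (s - a) ^ (α - 2) * (s - t) ^ α :=
  K_a_t_ibp_general a b α hα₁ t ht
end

section
/- For a < b, 1/2 < α < 1, and a < t < b, the function t ↦ K(a,t) is strictly decreasing; specifically ∂K(a,t)/∂t = -(1/Γ(α)²)(b-a)^{α-1}(b-t)^{α-1} - ((1-α)/Γ(α)²) ∫_t^b (s-a)^{α-2}(s-t)^{α-1} ds < 0. -/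
open Real MeasureTheory Set

/-!
The substitution `s = τ + v (b - τ)` writes `∫_τ^b (s-a)^p (s-τ)^q ds` as
`(b-τ)^(q+1) ∫_0^1 (τ + v (b-τ) - a)^p v^q dv`. The singularity of `(s-τ)^q` now sits at the
fixed endpoint `v = 0` and `τ` enters only through the smooth, positive base, so one may
differentiate under the integral sign. An integration by parts in `v` turns the product-rule
derivative into `-(b-a)^p (b-t)^q + p ∫_t^b (s-a)^(p-1) (s-t)^q ds`. For `p = q = α - 1` this is
`Γ(α)²` times the stated derivative, and both of its terms are negative because `α < 1`.
-/

open intervalIntegral Interval Topology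

theorem integral_mul_sub_rpow_eq_rpow_mul_integral_zero_one (f : ℝ → ℝ) (q : ℝ) {τ b : ℝ}
    (hτb : τ < b) :
    ∫ s in τ..b, f s * (s - τ) ^ q
      = (b - τ) ^ (q + 1) * ∫ v in (0:ℝ)..1, f (τ + v * (b - τ)) * v ^ q := by
  have hc : 0 < b - τ := sub_pos.2 hτb
  have hsub := mul_integral_comp_mul_add (a := 0) (b := 1)
    (f := fun s => f s * (s - τ) ^ q) (b - τ) τ
  simp only [mul_zero, zero_add, mul_one, sub_add_cancel, add_sub_cancel_right] at hsub
  rw [← hsub, rpow_add_one hc.ne', mul_comm _ (b - τ), mul_assoc]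
  congr 1
  rw [← intervalIntegral.integral_const_mul]
  refine intervalIntegral.integral_congr fun v hv => ?_
  have hv : 0 ≤ v := by rw [uIcc_of_le zero_le_one] at hv; exact hv.1
  simp only [mul_rpow hc.le hv]
  ring_nf

noncomputable def rescaledIntegral (a b p q τ : ℝ) : ℝ :=
  ∫ v in (0:ℝ)..1, (τ + v * (b - τ) - a) ^ p * v ^ q

section rescaledIntegral

variable {a b t : ℝ}

lemma add_mul_sub_sub_pos (hat : a < t) (htb : t ≤ b) {v : ℝ} (hv : 0 ≤ v) :
    0 < t + v * (b - t) - a := by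
  nlinarith

lemma continuousOn_add_mul_sub_sub_rpow (p : ℝ) (hat : a < t) (htb : t ≤ b) :
    ContinuousOn (fun v => (t + v * (b - t) - a) ^ p) (Icc 0 1) :=
  ContinuousOn.rpow_const (by fun_prop) fun _ hv =>
    Or.inl (add_mul_sub_sub_pos hat htb hv.1).ne'

lemma intervalIntegrable_rescaledIntegrand (p : ℝ) {q : ℝ} (hq : -1 < q) (hat : a < t)
    (htb : t ≤ b) :
    IntervalIntegrable (fun v => (t + v * (b - t) - a) ^ p * v ^ q) volume 0 1 :=
  (intervalIntegrable_rpow' hq).continuousOn_mul <| by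
    rw [uIcc_of_le zero_le_one]; exact continuousOn_add_mul_sub_sub_rpow p hat htb

theorem integral_rpow_mul_rpow_eq_rescaledIntegral (p q : ℝ) (htb : t < b) :
    ∫ s in t..b, (s - a) ^ p * (s - t) ^ q = (b - t) ^ (q + 1) * rescaledIntegral a b p q t :=
  integral_mul_sub_rpow_eq_rpow_mul_integral_zero_one (fun s => (s - a) ^ p) q htb

theorem rescaledIntegral_integration_by_parts (p : ℝ) {q : ℝ} (hq : 0 < q) (hat : a < t)
    (htb : t ≤ b) :
    q * rescaledIntegral a b p (q - 1) t + p * (b - t) * rescaledIntegral a b (p - 1) q t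
      = (b - a) ^ p := by
  set L : ℝ → ℝ := fun v => t + v * (b - t) - a
  have hint₁ := intervalIntegrable_rescaledIntegrand p (by linarith : -1 < q - 1) hat htb
  have hint₂ := intervalIntegrable_rescaledIntegrand (p - 1) (by linarith : -1 < q) hat htb
  have hderiv : ∀ v ∈ Ioo (0:ℝ) 1, HasDerivAt (fun v => L v ^ p * v ^ q)
      (q * (L v ^ p * v ^ (q - 1)) + p * (b - t) * (L v ^ (p - 1) * v ^ q)) v := by
    intro v hv
    have hL : HasDerivAt L (b - t) v :=
      ((((hasDerivAt_id v).mul_const (b - t)).const_add t).sub_const a).congr_deriv (one_mul _)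
    have hLpos := add_mul_sub_sub_pos hat htb hv.1.le
    refine ((hL.rpow_const (p := p) (Or.inl hLpos.ne')).mul
      (hasDerivAt_rpow_const (p := q) (Or.inl hv.1.ne'))).congr_deriv ?_
    ring
  have hcont : ContinuousOn (fun v => L v ^ p * v ^ q) (Icc 0 1) :=
    (continuousOn_add_mul_sub_sub_rpow p hat htb).mul
      (continuousOn_id.rpow_const fun _ _ => Or.inr hq.le)
  have hFTC := integral_eq_sub_of_hasDerivAt_of_le zero_le_one hcont hderiv
    ((hint₁.const_mul q).add (hint₂.const_mul (p * (b - t))))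
  rw [intervalIntegral.integral_add (hint₁.const_mul q) (hint₂.const_mul (p * (b - t))),
    intervalIntegral.integral_const_mul, intervalIntegral.integral_const_mul] at hFTC
  simp only [L, rescaledIntegral] at hFTC ⊢
  rw [hFTC, zero_rpow hq.ne', one_rpow]
  ring_nf

/-- For `τ` near `t` the base stays above `(t - a) / 2`, so the `τ`-derivative of the integrand is
dominated by a multiple of the integrable `v ^ q`. -/
theorem hasDerivAt_rescaledIntegral {p q : ℝ} (hp : p ≤ 1) (hq : -1 < q) (hat : a < t)
    (htb : t < b) :
    HasDerivAt (rescaledIntegral a b p q)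
      (p * (rescaledIntegral a b (p - 1) q t - rescaledIntegral a b (p - 1) (q + 1) t)) t := by
  set m := (t - a) / 2 with hm_def
  have hm : 0 < m := by positivity
  have hU : Ioo (a + m) b ∈ 𝓝 t := Ioo_mem_nhds (by linarith) htb
  set F' : ℝ → ℝ → ℝ := fun τ v =>
    p * (τ + v * (b - τ) - a) ^ (p - 1) * (1 - v) * v ^ q
  have hdiff : ∀ τ ∈ Ioo (a + m) b, ∀ v ∈ Icc (0:ℝ) 1,
      HasDerivAt (fun τ => (τ + v * (b - τ) - a) ^ p * v ^ q) (F' τ v) τ := by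
    intro τ hτ v hv
    have hL : HasDerivAt (fun τ => τ + v * (b - τ) - a) (1 - v) τ :=
      (((hasDerivAt_id τ).add (((hasDerivAt_id τ).const_sub b).const_mul v)).sub_const
        a).congr_deriv (by ring)
    have hLpos : 0 < τ + v * (b - τ) - a :=
      add_mul_sub_sub_pos (by linarith [hτ.1]) hτ.2.le hv.1
    refine ((hL.rpow_const (p := p) (Or.inl hLpos.ne')).mul_const (v ^ q)).congr_deriv ?_
    ring
  have hbound : ∀ τ ∈ Ioo (a + m) b, ∀ v ∈ Icc (0:ℝ) 1,
      ‖F' τ v‖ ≤ |p| * m ^ (p - 1) * v ^ q := by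
    intro τ hτ v hv
    have hmL : m ≤ τ + v * (b - τ) - a := by nlinarith [hτ.1, hτ.2, hv.1]
    have hLm : (τ + v * (b - τ) - a) ^ (p - 1) ≤ m ^ (p - 1) :=
      rpow_le_rpow_of_nonpos hm hmL (by linarith)
    have hL0 : 0 ≤ (τ + v * (b - τ) - a) ^ (p - 1) := rpow_nonneg (by linarith) _
    have hv0 : 0 ≤ v ^ q := rpow_nonneg hv.1 _
    have h1v : 0 ≤ 1 - v := sub_nonneg.2 hv.2
    simp only [F', norm_mul, norm_eq_abs, abs_of_nonneg hL0, abs_of_nonneg h1v,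
      abs_of_nonneg hv0]
    calc |p| * (τ + v * (b - τ) - a) ^ (p - 1) * (1 - v) * v ^ q
        ≤ |p| * m ^ (p - 1) * 1 * v ^ q := by gcongr; linarith [hv.1]
      _ = |p| * m ^ (p - 1) * v ^ q := by ring
  have hF'int : IntervalIntegrable (F' t) volume 0 1 :=
    (intervalIntegrable_rpow' hq).continuousOn_mul <| by
      rw [uIcc_of_le zero_le_one]
      exact (continuousOn_const.mul
        (continuousOn_add_mul_sub_sub_rpow (p - 1) hat htb.le)).mul (by fun_prop)
  have hIoc : ∀ v ∈ Ι (0:ℝ) 1, v ∈ Icc (0:ℝ) 1 := fun v hv =>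
    Ioc_subset_Icc_self (by rwa [uIoc_of_le zero_le_one] at hv)
  obtain ⟨-, hderiv⟩ := hasDerivAt_integral_of_dominated_loc_of_deriv_le hU
    (Filter.eventually_of_mem hU fun τ hτ =>
      (intervalIntegrable_rescaledIntegrand (t := τ) p hq (by linarith [hτ.1]) hτ.2.le).def'.1)
    (intervalIntegrable_rescaledIntegrand p hq hat htb.le) hF'int.def'.1
    (ae_of_all _ fun v hv τ hτ => hbound τ hτ v (hIoc v hv))
    ((intervalIntegrable_rpow' hq).const_mul _)
    (ae_of_all _ fun v hv τ hτ => hdiff τ hτ v (hIoc v hv))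
  refine hderiv.congr_deriv ?_
  rw [rescaledIntegral, rescaledIntegral, ← intervalIntegral.integral_sub
    (intervalIntegrable_rescaledIntegrand _ hq hat htb.le)
    (intervalIntegrable_rescaledIntegrand _ (by linarith) hat htb.le),
    ← intervalIntegral.integral_const_mul]
  refine intervalIntegral.integral_congr_ae (ae_of_all _ fun v hv => ?_)
  rw [uIoc_of_le zero_le_one] at hv
  simp only [F', rpow_add_one hv.1.ne']
  ring

theorem hasDerivAt_integral_rpow_mul_rpow {p q : ℝ} (hp : p ≤ 1) (hq : -1 < q)
    (hat : a < t) (htb : t < b) :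
    HasDerivAt (fun τ => ∫ s in τ..b, (s - a) ^ p * (s - τ) ^ q)
      (-((b - a) ^ p * (b - t) ^ q) + p * ∫ s in t..b, (s - a) ^ (p - 1) * (s - t) ^ q) t := by
  have hbt : HasDerivAt (fun τ => (b - τ) ^ (q + 1)) (-((q + 1) * (b - t) ^ q)) t := by
    refine (((hasDerivAt_id t).const_sub b).rpow_const
      (Or.inl (sub_pos.2 htb).ne')).congr_deriv ?_
    simp only [add_sub_cancel_right, id]
    ring
  have hprod := hbt.mul (hasDerivAt_rescaledIntegral hp hq hat htb)
  have heq : (fun τ => ∫ s in τ..b, (s - a) ^ p * (s - τ) ^ q) =ᶠ[𝓝 t]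
      fun τ => (b - τ) ^ (q + 1) * rescaledIntegral a b p q τ :=
    Filter.eventually_of_mem (Iio_mem_nhds htb) fun τ hτ =>
      integral_rpow_mul_rpow_eq_rescaledIntegral p q hτ
  refine (hprod.congr_of_eventuallyEq heq).congr_deriv ?_
  have hparts := rescaledIntegral_integration_by_parts p (by linarith : 0 < q + 1) hat htb.le
  rw [add_sub_cancel_right] at hparts
  rw [integral_rpow_mul_rpow_eq_rescaledIntegral (p - 1) q htb, rpow_add_one (sub_pos.2 htb).ne',
    ← hparts]
  ring

end rescaledIntegral

theorem K_a_t_deriv_neg_general (a b α : ℝ) (hα₁ : 1 / 2 < α) (hα₂ : α < 1) :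
    (∀ t ∈ Set.Ioo a b,
        HasDerivAt (fun τ => K b α a τ)
          (-(1 / Real.Gamma α ^ 2) * ((b - a) ^ (α - 1) * (b - t) ^ (α - 1)) -
            (1 - α) / Real.Gamma α ^ 2 * ∫ s in t..b, (s - a) ^ (α - 2) * (s - t) ^ (α - 1)) t ∧
        -(1 / Real.Gamma α ^ 2) * ((b - a) ^ (α - 1) * (b - t) ^ (α - 1)) -
            (1 - α) / Real.Gamma α ^ 2 * ∫ s in t..b, (s - a) ^ (α - 2) * (s - t) ^ (α - 1)
          < 0) ∧
      StrictAntiOn (fun t => K b α a t) (Set.Ioo a b) := by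
  have hΓ : 0 < Gamma α ^ 2 := pow_pos (Gamma_pos_of_pos (by linarith)) 2
  refine (fun hD => ⟨hD, strictAntiOn_of_deriv_neg (convex_Ioo a b)
    (fun t ht => (hD t ht).1.continuousAt.continuousWithinAt) fun t ht => ?_⟩)
    fun t ⟨hat, htb⟩ => ?_
  · rw [interior_Ioo] at ht
    exact (hD t ht).1.deriv ▸ (hD t ht).2
  have h := (hasDerivAt_integral_rpow_mul_rpow (p := α - 1) (q := α - 1) (by linarith)
    (by linarith) hat htb).const_mul (1 / Gamma α ^ 2)
  rw [sub_sub, one_add_one_eq_two] at h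
  have hK : (fun τ => K b α a τ) =ᶠ[𝓝 t]
      fun τ => 1 / Gamma α ^ 2 * ∫ s in τ..b, (s - a) ^ (α - 1) * (s - τ) ^ (α - 1) :=
    Filter.eventually_of_mem (Ioi_mem_nhds hat) fun τ hτ => by
      simp only [K, max_eq_right (le_of_lt (mem_Ioi.1 hτ))]
  refine ⟨(h.congr_of_eventuallyEq hK).congr_deriv (by ring), ?_⟩
  have hI : 0 ≤ ∫ s in t..b, (s - a) ^ (α - 2) * (s - t) ^ (α - 1) :=
    intervalIntegral.integral_nonneg htb.le fun s hs =>
      mul_nonneg (rpow_nonneg (by linarith [hs.1]) _) (rpow_nonneg (by linarith [hs.1]) _)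
  have hP : 0 < (b - a) ^ (α - 1) * (b - t) ^ (α - 1) :=
    mul_pos (rpow_pos_of_pos (by linarith) _) (rpow_pos_of_pos (by linarith) _)
  have := mul_pos (one_div_pos.2 hΓ) hP
  have := mul_nonneg (div_nonneg (sub_nonneg.2 hα₂.le) hΓ.le) hI
  linarith

/-- t ↦ K(a,t) is strictly decreasing on (a,b), with the stated
negative derivative. -/
theorem K_a_t_deriv_neg (a b α : ℝ) (hab : a < b) (hα₁ : 1 / 2 < α) (hα₂ : α < 1) :
    (∀ t ∈ Set.Ioo a b,
        HasDerivAt (fun τ => K b α a τ)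
          (-(1 / Real.Gamma α ^ 2) * ((b - a) ^ (α - 1) * (b - t) ^ (α - 1)) -
            (1 - α) / Real.Gamma α ^ 2 * ∫ s in t..b, (s - a) ^ (α - 2) * (s - t) ^ (α - 1)) t ∧
        -(1 / Real.Gamma α ^ 2) * ((b - a) ^ (α - 1) * (b - t) ^ (α - 1)) -
            (1 - α) / Real.Gamma α ^ 2 * ∫ s in t..b, (s - a) ^ (α - 2) * (s - t) ^ (α - 1)
          < 0) ∧
      StrictAntiOn (fun t => K b α a t) (Set.Ioo a b) :=
  K_a_t_deriv_neg_general a b α hα₁ hα₂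
end

section
/- For a < b and 1/2 < α < 1, for each fixed x ∈ (a,b) the function t ↦ G(x,t) is strictly increasing on (a, x); consequently sup_{a < t < x} G(x,t) = G(x,x) > 0 for every x ∈ (a,b). -/
/-!
For fixed `x`, `G(x,t) = K(x,t) - q K(a,t)` with `q = K(x,a)/K(a,a) > 0`. On `[a,x]` the kernel
`K(x,·)` is strictly increasing, because `(s-t)^(α-1)` grows with `t` (the exponent is negative),
while `K(a,·)` is strictly decreasing: after the substitution `u = s - t`, both the range `[0, b-t]`
and the integrand `u^(α-1) (u+t-a)^(α-1)` shrink as `t` grows. Hence `G(x,·)` is strictly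
increasing on `[a,x]` and `G(x,x) > G(x,a) = 0`.

The supremum over `(a,x)` is `G(x,x)` because `G(x,·)` is left-continuous at `x`: on `[x,b]` by
dominated convergence with the bound `(s-x)^(2α-2)`, integrable since `α > 1/2`, and the remaining
piece `∫_t^x (s-a)^(α-1) (s-t)^(α-1) ds` is at most `(x-t)^(2α-1)/(2α-1)`.
-/

open Real MeasureTheory Set

open Filter Topology

section RpowIntegrals

variable {r c u v : ℝ}

lemma intervalIntegrable_rpow_sub (c : ℝ) (hr : -1 < r) (u v : ℝ) :
    IntervalIntegrable (fun s => (s - c) ^ r) volume u v := by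
  simpa using
    (intervalIntegral.intervalIntegrable_rpow' (a := u - c) (b := v - c) hr).comp_sub_right c

lemma continuousOn_rpow_sub (hcu : c < u) (huv : u ≤ v) (r : ℝ) :
    ContinuousOn (fun s => (s - c) ^ r) (uIcc u v) := by
  rw [uIcc_of_le huv]
  exact (continuousOn_id.sub continuousOn_const).rpow_const
    fun s hs => Or.inl (sub_ne_zero.2 (hcu.trans_le hs.1).ne')

lemma intervalIntegrable_rpow_sub_mul_rpow_sub {c₁ c₂ : ℝ} (h₁ : c₁ ≤ u) (h₂ : c₂ ≤ u)
    (huv : u ≤ v) (hr : -1 < 2 * r) :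
    IntervalIntegrable (fun s => (s - c₁) ^ r * (s - c₂) ^ r) volume u v := by
  have hr' : -1 < r := by linarith
  rcases h₁.lt_or_eq with h₁ | rfl
  · exact (intervalIntegrable_rpow_sub c₂ hr' u v).continuousOn_mul
      (continuousOn_rpow_sub h₁ huv r)
  rcases h₂.lt_or_eq with h₂ | rfl
  · exact (intervalIntegrable_rpow_sub c₁ hr' c₁ v).mul_continuousOn
      (continuousOn_rpow_sub h₂ huv r)
  rw [intervalIntegrable_iff_integrableOn_Ioc_of_le huv]
  refine ((intervalIntegrable_iff_integrableOn_Ioc_of_le huv).1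
    (intervalIntegrable_rpow_sub c₂ hr c₂ v)).congr_fun (fun s hs => ?_) measurableSet_Ioc
  simp only [two_mul, rpow_add (sub_pos.2 hs.1)]

lemma integral_rpow_sub_mul_rpow_sub_lt {t₁ t₂ : ℝ} (hc : c ≤ u) (h₁₂ : t₁ < t₂)
    (h₂ : t₂ ≤ u) (huv : u < v) (hr : -1 < 2 * r) (hr0 : r < 0) :
    ∫ s in u..v, (s - c) ^ r * (s - t₁) ^ r < ∫ s in u..v, (s - c) ^ r * (s - t₂) ^ r := by
  have hi₁ := intervalIntegrable_rpow_sub_mul_rpow_sub hc (h₁₂.le.trans h₂) huv.le hr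
  have hi₂ := intervalIntegrable_rpow_sub_mul_rpow_sub hc h₂ huv.le hr
  rw [← sub_pos, ← intervalIntegral.integral_sub hi₂ hi₁]
  refine intervalIntegral.intervalIntegral_pos_of_pos_on (hi₂.sub hi₁) (fun s hs => ?_) huv
  rw [← mul_sub]
  exact mul_pos (rpow_pos_of_pos (by linarith [hs.1]) r) (sub_pos.2 <|
    rpow_lt_rpow_of_neg (by linarith [hs.1]) (by linarith) hr0)

lemma tendsto_integral_rpow_sub_mul_rpow_sub_nhdsLT (hc : c ≤ u) (huv : u ≤ v)
    (hr : -1 < 2 * r) (hr0 : r ≤ 0) :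
    Tendsto (fun t => ∫ s in u..v, (s - c) ^ r * (s - t) ^ r) (𝓝[<] u)
      (𝓝 (∫ s in u..v, (s - c) ^ r * (s - u) ^ r)) := by
  have hIoc : uIoc u v = Ioc u v := uIoc_of_le huv
  refine intervalIntegral.tendsto_integral_filter_of_dominated_convergence _ ?_ ?_
    (intervalIntegrable_rpow_sub_mul_rpow_sub hc le_rfl huv hr) ?_
  · filter_upwards [self_mem_nhdsWithin] with t (ht : t < u)
    exact ((intervalIntegrable_rpow_sub_mul_rpow_sub hc ht.le huv hr).def'.1)
  · filter_upwards [self_mem_nhdsWithin] with t (ht : t < u)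
    refine ae_of_all _ fun s hs => ?_
    rw [hIoc] at hs
    have hsc : 0 ≤ (s - c) ^ r := rpow_nonneg (by linarith [hs.1]) r
    rw [norm_of_nonneg (mul_nonneg hsc (rpow_nonneg (by linarith [hs.1]) r))]
    exact mul_le_mul_of_nonneg_left
      (rpow_le_rpow_of_nonpos (sub_pos.2 hs.1) (by linarith) hr0) hsc
  · refine ae_of_all _ fun s hs => ?_
    rw [hIoc] at hs
    exact tendsto_const_nhds.mul <| ((continuousAt_const.sub continuousAt_id).rpow_const
      (Or.inl (sub_ne_zero.2 hs.1.ne'))).tendsto.mono_left nhdsWithin_le_nhds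

lemma tendsto_integral_rpow_sub_mul_rpow_sub_self_nhdsLT (hc : c < u) (hr : -1 < 2 * r)
    (hr0 : r ≤ 0) :
    Tendsto (fun t => ∫ s in t..u, (s - c) ^ r * (s - t) ^ r) (𝓝[<] u) (𝓝 0) := by
  have hbound : Tendsto (fun t => (u - t) ^ (2 * r + 1) / (2 * r + 1)) (𝓝[<] u) (𝓝 0) := by
    have h : ContinuousAt (fun t => (u - t) ^ (2 * r + 1) / (2 * r + 1)) u :=
      ((continuousAt_const.sub continuousAt_id).rpow_const (Or.inr (by linarith))).div_const _
    simpa [zero_rpow (by linarith : 2 * r + 1 ≠ 0)] using h.tendsto.mono_left nhdsWithin_le_nhds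
  refine tendsto_of_tendsto_of_tendsto_of_le_of_le' tendsto_const_nhds hbound ?_ ?_
  · filter_upwards [Ioo_mem_nhdsLT hc] with t ht
    refine intervalIntegral.integral_nonneg ht.2.le fun s hs => ?_
    exact mul_nonneg (rpow_nonneg (by linarith [hs.1, ht.1]) r)
      (rpow_nonneg (by linarith [hs.1]) r)
  · filter_upwards [Ioo_mem_nhdsLT hc] with t ht
    have hle : ∀ s ∈ Ioo t u, (s - c) ^ r * (s - t) ^ r ≤ (s - t) ^ (2 * r) := by
      intro s hs
      have hst : 0 < s - t := sub_pos.2 hs.1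
      rw [two_mul, rpow_add hst]
      exact mul_le_mul_of_nonneg_right
        (rpow_le_rpow_of_nonpos hst (by linarith [ht.1]) hr0) (rpow_nonneg hst.le r)
    calc ∫ s in t..u, (s - c) ^ r * (s - t) ^ r
        ≤ ∫ s in t..u, (s - t) ^ (2 * r) :=
          intervalIntegral.integral_mono_on_of_le_Ioo ht.2.le
            (intervalIntegrable_rpow_sub_mul_rpow_sub ht.1.le le_rfl ht.2.le hr)
            (intervalIntegrable_rpow_sub t hr t u) hle
      _ = (u - t) ^ (2 * r + 1) / (2 * r + 1) := by
          rw [intervalIntegral.integral_comp_sub_right (fun w => w ^ (2 * r)), sub_self,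
            integral_rpow (Or.inl hr), zero_rpow (by linarith), sub_zero]

end RpowIntegrals

section Kernel

variable {b α : ℝ}

lemma one_div_Gamma_sq_pos (hα : 0 < α) : 0 < 1 / Gamma α ^ 2 := by
  have := Gamma_pos_of_pos hα
  positivity

lemma K_pos (hα : 1 / 2 < α) {x t : ℝ} (hx : x < b) (ht : t < b) : 0 < K b α x t := by
  refine mul_pos (one_div_Gamma_sq_pos (by linarith))
    (intervalIntegral.intervalIntegral_pos_of_pos_on
      (intervalIntegrable_rpow_sub_mul_rpow_sub (le_max_left x t) (le_max_right x t)
        (max_lt hx ht).le (by linarith)) (fun s hs => ?_) (max_lt hx ht))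
  have hs := hs.1
  rw [max_lt_iff] at hs
  exact mul_pos (rpow_pos_of_pos (by linarith) _) (rpow_pos_of_pos (by linarith) _)

lemma K_strictMonoOn_Iic (hα₁ : 1 / 2 < α) (hα₂ : α < 1) {x : ℝ} (hx : x < b) :
    StrictMonoOn (K b α x) (Iic x) := by
  intro t₁ (ht₁ : t₁ ≤ x) t₂ (ht₂ : t₂ ≤ x) h₁₂
  simp only [K, max_eq_left ht₁, max_eq_left ht₂]
  exact mul_lt_mul_of_pos_left
    (integral_rpow_sub_mul_rpow_sub_lt le_rfl h₁₂ ht₂ hx (by linarith) (by linarith))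
    (one_div_Gamma_sq_pos (by linarith))

-- The `u - 0` matches the shape of `integral_rpow_sub_mul_rpow_sub_lt`.
lemma K_eq_integral_comp_sub {c t : ℝ} (hct : c ≤ t) :
    K b α c t =
      1 / Gamma α ^ 2 * ∫ u in 0..b - t, (u - 0) ^ (α - 1) * (u - (c - t)) ^ (α - 1) := by
  rw [K, max_eq_right hct, ← sub_self t, ← intervalIntegral.integral_comp_sub_right]
  congr 1
  refine intervalIntegral.integral_congr fun s _ => ?_
  simp only [sub_sub_sub_cancel_right, mul_comm]

lemma K_strictAntiOn_Ico (hα₁ : 1 / 2 < α) (hα₂ : α < 1) {c : ℝ} :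
    StrictAntiOn (K b α c) (Ico c b) := by
  intro t₁ ht₁ t₂ ht₂ h₁₂
  rw [K_eq_integral_comp_sub ht₁.1, K_eq_integral_comp_sub ht₂.1]
  refine mul_lt_mul_of_pos_left ?_ (one_div_Gamma_sq_pos (by linarith))
  have hb₂ : 0 < b - t₂ := sub_pos.2 ht₂.2
  calc ∫ u in 0..b - t₂, (u - 0) ^ (α - 1) * (u - (c - t₂)) ^ (α - 1)
      < ∫ u in 0..b - t₂, (u - 0) ^ (α - 1) * (u - (c - t₁)) ^ (α - 1) :=
        integral_rpow_sub_mul_rpow_sub_lt le_rfl (by linarith) (by linarith [ht₁.1]) hb₂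
          (by linarith) (by linarith)
    _ ≤ ∫ u in 0..b - t₁, (u - 0) ^ (α - 1) * (u - (c - t₁)) ^ (α - 1) := by
        refine intervalIntegral.integral_mono_interval le_rfl hb₂.le (by linarith)
          ((ae_restrict_iff' measurableSet_Ioc).2 (ae_of_all _ fun u hu => ?_))
          (intervalIntegrable_rpow_sub_mul_rpow_sub le_rfl (by linarith [ht₁.1]) (by linarith)
            (by linarith))
        exact mul_nonneg (rpow_nonneg (by linarith [hu.1]) _)
          (rpow_nonneg (by linarith [hu.1, ht₁.1]) _)

lemma K_continuousWithinAt_Iio (hα₁ : 1 / 2 < α) (hα₂ : α ≤ 1) {c x : ℝ} (hcx : c ≤ x)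
    (hxb : x ≤ b) : ContinuousWithinAt (K b α c) (Iio x) x := by
  have hr : -1 < 2 * (α - 1) := by linarith
  have hr0 : α - 1 ≤ 0 := by linarith
  have hlim := tendsto_integral_rpow_sub_mul_rpow_sub_nhdsLT hcx hxb hr hr0
  rcases hcx.lt_or_eq with hcx | rfl
  · have hKx : K b α c x = 1 / Gamma α ^ 2 *
        (0 + ∫ s in x..b, (s - c) ^ (α - 1) * (s - x) ^ (α - 1)) := by
      rw [K, max_eq_right hcx.le, zero_add]
    rw [ContinuousWithinAt, hKx]
    refine (((tendsto_integral_rpow_sub_mul_rpow_sub_self_nhdsLT hcx hr hr0).add hlim).const_mul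
      _).congr' ?_
    filter_upwards [Ioo_mem_nhdsLT hcx] with t ht
    rw [K, max_eq_right ht.1.le, intervalIntegral.integral_add_adjacent_intervals
      (intervalIntegrable_rpow_sub_mul_rpow_sub ht.1.le le_rfl ht.2.le hr)
      (intervalIntegrable_rpow_sub_mul_rpow_sub (ht.1.le.trans ht.2.le) ht.2.le hxb hr)]
  · rw [ContinuousWithinAt, K, max_self]
    refine (hlim.const_mul _).congr' ?_
    filter_upwards [self_mem_nhdsWithin] with t (ht : t < c)
    rw [K, max_eq_left ht.le]

end Kernel

lemma MonotoneOn.sSup_image_Ioo_eq_of_continuousWithinAt {β : Type*}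
    [ConditionallyCompleteLinearOrder β] [TopologicalSpace β] [OrderTopology β] {f : ℝ → β}
    {y x : ℝ} (hyx : y < x) (hf : MonotoneOn f (Ioc y x))
    (hfx : ContinuousWithinAt f (Iio x) x) :
    sSup (f '' Ioo y x) = f x := by
  have hbdd : BddAbove (f '' Ioo y x) := ⟨f x, by
    rintro _ ⟨t, ht, rfl⟩
    exact hf (Ioo_subset_Ioc_self ht) (right_mem_Ioc.2 hyx) ht.2.le⟩
  exact tendsto_nhds_unique
    ((hf.mono Ioo_subset_Ioc_self).tendsto_nhdsWithin_Ioo_left (nonempty_Ioo.2 hyx) hbdd) hfx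

section Green

variable {a b α x : ℝ}

lemma G_left_endpoint (h : K b α a a ≠ 0) : G a b α x a = 0 := by
  rw [G, mul_div_right_comm, div_self h, one_mul, sub_self]

lemma G_strictMonoOn_Icc (hα₁ : 1 / 2 < α) (hα₂ : α < 1) (hax : a ≤ x) (hxb : x < b) :
    StrictMonoOn (G a b α x) (Icc a x) := by
  intro t₁ ht₁ t₂ ht₂ h₁₂
  have hab := hax.trans_lt hxb
  have hq : 0 ≤ K b α x a / K b α a a := (div_pos (K_pos hα₁ hxb hab) (K_pos hα₁ hab hab)).le
  have hKx := K_strictMonoOn_Iic hα₁ hα₂ hxb ht₁.2 ht₂.2 h₁₂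
  have hKa := (K_strictAntiOn_Ico hα₁ hα₂ ⟨ht₁.1, ht₁.2.trans_lt hxb⟩
    ⟨ht₂.1, ht₂.2.trans_lt hxb⟩ h₁₂).le
  simp only [G, mul_div_assoc]
  linarith [mul_le_mul_of_nonneg_right hKa hq]

lemma G_continuousWithinAt_Iio (hα₁ : 1 / 2 < α) (hα₂ : α ≤ 1) (hax : a ≤ x) (hxb : x ≤ b) :
    ContinuousWithinAt (G a b α x) (Iio x) x :=
  (K_continuousWithinAt_Iio hα₁ hα₂ le_rfl hxb).sub
    (((K_continuousWithinAt_Iio hα₁ hα₂ hax hxb).mul_const _).div_const _)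

end Green

theorem G_sup_diag_general (a b α : ℝ) (hα₁ : 1 / 2 < α) (hα₂ : α < 1)
    (x : ℝ) (hx : x ∈ Set.Ioo a b) :
    StrictMonoOn (fun t => G a b α x t) (Set.Ioo a x) ∧
      sSup ((fun t => G a b α x t) '' Set.Ioo a x) = G a b α x x ∧
      0 < G a b α x x := by
  obtain ⟨hax, hxb⟩ := hx
  have hG := G_strictMonoOn_Icc hα₁ hα₂ hax.le hxb
  have hGa : G a b α x a = 0 := G_left_endpoint (K_pos hα₁ (hax.trans hxb) (hax.trans hxb)).ne'
  have hGx : 0 < G a b α x x :=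
    hGa ▸ hG (left_mem_Icc.2 hax.le) (right_mem_Icc.2 hax.le) hax
  refine ⟨hG.mono Ioo_subset_Icc_self, ?_, hGx⟩
  exact (hG.monotoneOn.mono Ioc_subset_Icc_self).sSup_image_Ioo_eq_of_continuousWithinAt hax
    (G_continuousWithinAt_Iio hα₁ hα₂.le hax.le hxb.le)

/-- for fixed x ∈ (a,b), t ↦ G(x,t) is strictly increasing on (a,x),
and sup over a<t<x of G(x,t) equals G(x,x) > 0. -/
theorem G_sup_diag (a b α : ℝ) (hab : a < b) (hα₁ : 1 / 2 < α) (hα₂ : α < 1)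
    (x : ℝ) (hx : x ∈ Set.Ioo a b) :
    StrictMonoOn (fun t => G a b α x t) (Set.Ioo a x) ∧
      sSup ((fun t => G a b α x t) '' Set.Ioo a x) = G a b α x x ∧
      0 < G a b α x x :=
  G_sup_diag_general a b α hα₁ hα₂ x hx
end

section
/- Let a < b, 1/2 < α ≤ 1, let q : [a,b] → ℝ be continuous, and let G be the Green's function for the fractional Dirichlet problem. If a nontrivial continuous function u : [a,b] → ℝ satisfies u(x) = ∫_a^b G(x,t) q(t) u(t) dt for all x, then ∫_a^b |q(t)| dt ≥ (sup_{a<x<b} G(x,x))^{-1}. -/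
open Real MeasureTheory Set

/-!
`K(x,t)` is, up to the factor `Γ(α)⁻²`, the `L²(a,b)` inner product of the kernels
`φ_x(s) = (s - x)₊^(α-1)` (`fracKernel`), which are square integrable exactly because
`α > 1/2`. The Green's function `G(x,t)` is then the inner product of the components of `φ_x`
and `φ_t` orthogonal to `φ_a`, so Cauchy–Schwarz gives `|G(x,t)| ≤ √(G(x,x) G(t,t))`; since
`G(a,a) = G(b,b) = 0`, this is at most `S = sup_{a<x<b} G(x,x)` on the whole square. Evaluating
the integral equation at a maximum point `x₀` of `|u|` yields `|u(x₀)| ≤ S |u(x₀)| ∫ |q|`,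
i.e. `1 ≤ S ∫ |q|`.
-/

open scoped RealInnerProductSpace

theorem one_le_mul_integral_abs_of_eq_integral {k : ℝ → ℝ → ℝ} {q u : ℝ → ℝ} {a b S : ℝ}
    (hab : a ≤ b) (hk : ∀ x ∈ Icc a b, ∀ t ∈ Icc a b, |k x t| ≤ S)
    (hq : IntervalIntegrable q volume a b) (hu : ContinuousOn u (Icc a b))
    (hnt : ∃ x ∈ Icc a b, u x ≠ 0)
    (heq : ∀ x ∈ Icc a b, u x = ∫ t in a..b, k x t * q t * u t) :
    1 ≤ S * ∫ t in a..b, |q t| := by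
  obtain ⟨x₀, hx₀, hmax⟩ := isCompact_Icc.exists_isMaxOn (nonempty_Icc.2 hab) hu.abs
  obtain ⟨x, hx, hux⟩ := hnt
  have hM : 0 < |u x₀| := (abs_pos.2 hux).trans_le (hmax hx)
  have hS : 0 ≤ S := (abs_nonneg _).trans (hk x hx x hx)
  have hbound : ∀ t ∈ Ioc a b, ‖k x₀ t * q t * u t‖ ≤ S * |u x₀| * |q t| := fun t ht => by
    rw [Real.norm_eq_abs, abs_mul, abs_mul]
    calc |k x₀ t| * |q t| * |u t| ≤ S * |q t| * |u x₀| := by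
          gcongr ?_ * _ * ?_
          exacts [hk x₀ hx₀ t (Ioc_subset_Icc_self ht), hmax (Ioc_subset_Icc_self ht)]
      _ = S * |u x₀| * |q t| := by ring
  have key : |u x₀| * 1 ≤ |u x₀| * (S * ∫ t in a..b, |q t|) := calc
    |u x₀| * 1 = ‖∫ t in a..b, k x₀ t * q t * u t‖ := by rw [mul_one, heq x₀ hx₀, Real.norm_eq_abs]
    _ ≤ ∫ t in a..b, S * |u x₀| * |q t| :=
      intervalIntegral.norm_integral_le_of_norm_le hab (ae_of_all _ hbound) (hq.abs.const_mul _)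
    _ = |u x₀| * (S * ∫ t in a..b, |q t|) := by rw [intervalIntegral.integral_const_mul]; ring
  exact le_of_mul_le_mul_left key hM

theorem inner_starProjection_orthogonal_singleton {E : Type*} [NormedAddCommGroup E]
    [InnerProductSpace ℝ E] (e u v : E) :
    ⟪(ℝ ∙ e)ᗮ.starProjection u, (ℝ ∙ e)ᗮ.starProjection v⟫ = ⟪u, v⟫ - ⟪e, v⟫ * ⟪u, e⟫ / ⟪e, e⟫ := by
  rcases eq_or_ne e 0 with rfl | he
  · simp [Submodule.starProjection_top]
  have he' : ⟪e, e⟫ ≠ 0 := inner_self_ne_zero.2 he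
  simp only [Submodule.starProjection_orthogonal_val, Submodule.starProjection_singleton,
    RCLike.ofReal_real_eq_id, id, ← real_inner_self_eq_norm_sq, inner_sub_left, inner_sub_right,
    real_inner_smul_left, real_inner_smul_right, real_inner_comm e u]
  field_simp
  ring

section GreenFunction

variable {a b α : ℝ}

noncomputable def fracKernel (α x : ℝ) : ℝ → ℝ := (Ioi x).indicator fun s => (s - x) ^ (α - 1)

lemma measurable_fracKernel (α x : ℝ) : Measurable (fracKernel α x) :=
  ((measurable_id.sub_const x).pow_const _).indicator measurableSet_Ioi

lemma memLp_fracKernel (hα : 1 / 2 < α) (x : ℝ) :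
    MemLp (fracKernel α x) 2 (volume.restrict (Ioc a b)) := by
  rw [memLp_two_iff_integrable_sq (measurable_fracKernel α x).aestronglyMeasurable]
  have hsq : (fun s => fracKernel α x s ^ 2)
      = (Ioi x).indicator fun s => (s - x) ^ (2 * α - 2) := by
    ext s
    by_cases hs : x < s
    · simp only [fracKernel, indicator_of_mem (mem_Ioi.2 hs), ← rpow_natCast,
        ← rpow_mul (sub_pos.2 hs).le]
      ring_nf
    · simp [fracKernel, indicator_of_notMem (notMem_Ioi.2 (not_lt.1 hs))]
  have hint : IntegrableOn (fun s => (s - x) ^ (2 * α - 2)) (Ioc x b) := by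
    have h := (intervalIntegral.intervalIntegrable_rpow' (r := 2 * α - 2) (by linarith)
      (a := 0) (b := b - x)).comp_sub_right x
    simpa using h.1
  rw [hsq, integrable_indicator_iff measurableSet_Ioi, IntegrableOn,
    Measure.restrict_restrict measurableSet_Ioi]
  exact hint.mono_set fun s hs => ⟨hs.1, hs.2.2⟩

lemma integral_fracKernel_mul {x t : ℝ} (hx : x ∈ Icc a b) (ht : t ∈ Icc a b) :
    ∫ s in Ioc a b, fracKernel α x s * fracKernel α t s
      = ∫ s in max x t..b, (s - x) ^ (α - 1) * (s - t) ^ (α - 1) := by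
  have hprod : (fun s => fracKernel α x s * fracKernel α t s)
      = (Ioi (max x t)).indicator fun s => (s - x) ^ (α - 1) * (s - t) ^ (α - 1) := by
    ext s
    simp only [fracKernel, indicator_apply, mem_Ioi, max_lt_iff]
    split_ifs <;> simp_all
  rw [hprod, setIntegral_indicator measurableSet_Ioi, Ioc_inter_Ioi,
    max_eq_right (hx.1.trans (le_max_left x t)), intervalIntegral.integral_of_le (max_le hx.2 ht.2)]

noncomputable def fracKernelLp (a b : ℝ) (hα : 1 / 2 < α) (x : ℝ) :
    Lp ℝ 2 (volume.restrict (Ioc a b)) :=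
  (memLp_fracKernel hα x).toLp

lemma inner_fracKernelLp (hα : 1 / 2 < α) (x t : ℝ) :
    ⟪fracKernelLp a b hα x, fracKernelLp a b hα t⟫
      = ∫ s in Ioc a b, fracKernel α x s * fracKernel α t s := by
  rw [L2.inner_def]
  refine integral_congr_ae ?_
  filter_upwards [(memLp_fracKernel hα x).coeFn_toLp, (memLp_fracKernel hα t).coeFn_toLp]
    with s hx ht
  simp [fracKernelLp, hx, ht, mul_comm]

lemma K_eq_inner (hα : 1 / 2 < α) {x t : ℝ} (hx : x ∈ Icc a b) (ht : t ∈ Icc a b) :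
    K b α x t = 1 / Gamma α ^ 2 * ⟪fracKernelLp a b hα x, fracKernelLp a b hα t⟫ := by
  rw [K, inner_fracKernelLp, integral_fracKernel_mul hx ht]

noncomputable def greenVector (a b : ℝ) (hα : 1 / 2 < α) (x : ℝ) :
    Lp ℝ 2 (volume.restrict (Ioc a b)) :=
  (ℝ ∙ fracKernelLp a b hα a)ᗮ.starProjection (fracKernelLp a b hα x)

lemma G_eq_inner (hα : 1 / 2 < α) {x t : ℝ} (hx : x ∈ Icc a b) (ht : t ∈ Icc a b) :
    G a b α x t = 1 / Gamma α ^ 2 * ⟪greenVector a b hα x, greenVector a b hα t⟫ := by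
  have ha : a ∈ Icc a b := ⟨le_rfl, hx.1.trans hx.2⟩
  have hc : 1 / Gamma α ^ 2 ≠ 0 := by
    have := Gamma_pos_of_pos (show 0 < α by linarith)
    positivity
  rw [greenVector, greenVector, inner_starProjection_orthogonal_singleton, G, K_eq_inner hα hx ht,
    K_eq_inner hα ha ht, K_eq_inner hα hx ha, K_eq_inner hα ha ha, mul_mul_mul_comm, mul_assoc,
    mul_div_mul_left _ _ hc]
  ring

lemma G_self_nonneg (hα : 1 / 2 < α) {x : ℝ} (hx : x ∈ Icc a b) : 0 ≤ G a b α x x := by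
  rw [G_eq_inner hα hx hx, real_inner_self_eq_norm_sq]
  positivity

lemma abs_G_le_sqrt (hα : 1 / 2 < α) {x t : ℝ} (hx : x ∈ Icc a b) (ht : t ∈ Icc a b) :
    |G a b α x t| ≤ √(G a b α x x * G a b α t t) := by
  set c := 1 / Gamma α ^ 2
  have hc : 0 ≤ c := by positivity
  rw [G_eq_inner hα hx ht, G_eq_inner hα hx hx, G_eq_inner hα ht ht, real_inner_self_eq_norm_sq,
    real_inner_self_eq_norm_sq, abs_mul, abs_of_nonneg hc,
    show c * ‖greenVector a b hα x‖ ^ 2 * (c * ‖greenVector a b hα t‖ ^ 2)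
      = (c * (‖greenVector a b hα x‖ * ‖greenVector a b hα t‖)) ^ 2 by ring,
    sqrt_sq (by positivity)]
  exact mul_le_mul_of_nonneg_left (abs_real_inner_le_norm _ _) hc

lemma G_self_le_K_self (hα : 1 / 2 < α) {x : ℝ} (hx : x ∈ Icc a b) :
    G a b α x x ≤ K b α x x := by
  rw [G_eq_inner hα hx hx, K_eq_inner hα hx hx, real_inner_self_eq_norm_sq,
    real_inner_self_eq_norm_sq]
  gcongr
  exact Submodule.norm_starProjection_apply_le _ _

lemma K_self (hα : 1 / 2 < α) {x : ℝ} (hx : x ≤ b) :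
    K b α x x = 1 / Gamma α ^ 2 * ((b - x) ^ (2 * α - 1) / (2 * α - 1)) := by
  have hsq : ∫ s in x..b, (s - x) ^ (α - 1) * (s - x) ^ (α - 1)
      = ∫ s in x..b, (s - x) ^ (2 * α - 2) := by
    rw [intervalIntegral.integral_of_le hx, intervalIntegral.integral_of_le hx]
    refine setIntegral_congr_fun measurableSet_Ioc fun s hs => ?_
    rw [← rpow_add (sub_pos.2 hs.1)]
    ring_nf
  rw [K, max_self, hsq, intervalIntegral.integral_comp_sub_right (fun y => y ^ (2 * α - 2)),
    sub_self, integral_rpow (Or.inl (by linarith)), zero_rpow (by linarith)]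
  ring_nf

lemma G_self_le (hα : 1 / 2 < α) {x : ℝ} (hx : x ∈ Icc a b) :
    G a b α x x ≤ 1 / Gamma α ^ 2 * ((b - a) ^ (2 * α - 1) / (2 * α - 1)) := by
  refine (G_self_le_K_self hα hx).trans ?_
  rw [K_self hα hx.2]
  have : 0 < 2 * α - 1 := by linarith
  gcongr
  exacts [sub_nonneg.2 hx.2, hx.1]

lemma G_left_self : G a b α a a = 0 := by
  rcases eq_or_ne (K b α a a) 0 with h | h
  · simp [G, h]
  · rw [G, mul_div_cancel_right₀ _ h, sub_self]

lemma G_right_self (hab : a ≤ b) : G a b α b b = 0 := by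
  simp [G, K, max_eq_right hab]

lemma G_self_le_sSup (hab : a < b) (hα : 1 / 2 < α) {x : ℝ} (hx : x ∈ Icc a b) :
    G a b α x x ≤ sSup ((fun x => G a b α x x) '' Ioo a b) := by
  have hbdd : BddAbove ((fun x => G a b α x x) '' Ioo a b) :=
    ⟨_, forall_mem_image.2 fun y hy => G_self_le hα (Ioo_subset_Icc_self hy)⟩
  have hmid : (a + b) / 2 ∈ Ioo a b := ⟨by linarith, by linarith⟩
  have hS : 0 ≤ sSup ((fun x => G a b α x x) '' Ioo a b) :=
    (G_self_nonneg hα (Ioo_subset_Icc_self hmid)).trans (le_csSup hbdd (mem_image_of_mem _ hmid))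
  rcases hx.1.eq_or_lt with rfl | hax
  · rwa [G_left_self]
  rcases hx.2.eq_or_lt with rfl | hxb
  · rwa [G_right_self hab.le]
  exact le_csSup hbdd (mem_image_of_mem _ ⟨hax, hxb⟩)

lemma abs_G_le_sSup (hab : a < b) (hα : 1 / 2 < α) {x t : ℝ} (hx : x ∈ Icc a b)
    (ht : t ∈ Icc a b) : |G a b α x t| ≤ sSup ((fun x => G a b α x x) '' Ioo a b) := by
  set S := sSup ((fun x => G a b α x x) '' Ioo a b)
  have hS : 0 ≤ S := (G_self_nonneg hα hx).trans (G_self_le_sSup hab hα hx)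
  calc |G a b α x t| ≤ √(G a b α x x * G a b α t t) := abs_G_le_sqrt hα hx ht
    _ ≤ √(S * S) := by
      gcongr
      exacts [G_self_nonneg hα ht, G_self_le_sSup hab hα hx, G_self_le_sSup hab hα ht]
    _ = S := sqrt_mul_self hS

end GreenFunction

theorem lyapunov_fractional_general (a b α : ℝ) (hab : a < b) (hα₁ : 1 / 2 < α)
    (q u : ℝ → ℝ) (hq : ContinuousOn q (Set.Icc a b)) (hu : ContinuousOn u (Set.Icc a b))
    (hnt : ∃ x ∈ Set.Icc a b, u x ≠ 0)
    (heq : ∀ x ∈ Set.Icc a b, u x = ∫ t in a..b, G a b α x t * q t * u t) :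
    (∫ t in a..b, |q t|) ≥ (sSup ((fun x => G a b α x x) '' Set.Ioo a b))⁻¹ := by
  have hS : 1 ≤ sSup ((fun x => G a b α x x) '' Ioo a b) * ∫ t in a..b, |q t| :=
    one_le_mul_integral_abs_of_eq_integral hab.le (fun x hx t ht => abs_G_le_sSup hab hα₁ hx ht)
      (hq.intervalIntegrable_of_Icc hab.le) hu hnt heq
  have hQ : 0 ≤ ∫ t in a..b, |q t| :=
    intervalIntegral.integral_nonneg hab.le fun t _ => abs_nonneg _
  exact (inv_le_iff_one_le_mul₀' (pos_of_mul_pos_left (one_pos.trans_le hS) hQ)).2 hS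

/-- Lyapunov-type inequality for the fractional Dirichlet problem. -/
theorem lyapunov_fractional (a b α : ℝ) (hab : a < b) (hα₁ : 1 / 2 < α) (hα₂ : α ≤ 1)
    (q u : ℝ → ℝ) (hq : ContinuousOn q (Set.Icc a b)) (hu : ContinuousOn u (Set.Icc a b))
    (hua : u a = 0) (hub : u b = 0) (hnt : ∃ x ∈ Set.Icc a b, u x ≠ 0)
    (heq : ∀ x ∈ Set.Icc a b, u x = ∫ t in a..b, G a b α x t * q t * u t) :
    (∫ t in a..b, |q t|) ≥ (sSup ((fun x => G a b α x x) '' Set.Ioo a b))⁻¹ :=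
  lyapunov_fractional_general a b α hab hα₁ q u hq hu hnt heq
end

section
/- Let a < b and let q : [a,b] → ℝ be continuous. If a nontrivial continuous function u satisfies u(x) = ∫_a^b G(x,t) q(t) u(t) dt with G(x,t) the Green's function for -u'' = qu with Dirichlet conditions (G(x,t) = (b - max{x,t})(min{x,t} - a)/(b - a)), then ∫_a^b |q(t)| dt ≥ 4/(b-a). -/
open Real MeasureTheory Set

/-- classical Lyapunov inequality via the Green's function
G(x,t) = (b - max{x,t})(min{x,t} - a)/(b - a). -/
theorem lyapunov_classical (a b : ℝ) (hab : a < b)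
    (q u : ℝ → ℝ) (hq : ContinuousOn q (Set.Icc a b)) (hu : ContinuousOn u (Set.Icc a b))
    (hua : u a = 0) (hub : u b = 0) (hnt : ∃ x ∈ Set.Icc a b, u x ≠ 0)
    (heq : ∀ x ∈ Set.Icc a b,
      u x = ∫ t in a..b, (b - max x t) * (min x t - a) / (b - a) * q t * u t) :
    (∫ t in a..b, |q t|) ≥ 4 / (b - a) := by
  have hab' : a ≤ b := hab.le
  have hba : (0:ℝ) < b - a := by linarith
  -- maximize |u|
  obtain ⟨x₀, hx₀, hmax⟩ := isCompact_Icc.exists_isMaxOn (s := Icc a b)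
    ⟨a, le_refl a, hab'⟩ hu.abs
  set M := |u x₀| with hM
  have hMnn : 0 ≤ M := abs_nonneg _
  obtain ⟨y, hy, hyne⟩ := hnt
  have hMpos : 0 < M := lt_of_lt_of_le (abs_pos.mpr hyne) (hmax hy)
  -- Green function bounds
  have hGnn : ∀ t ∈ Icc a b, 0 ≤ (b - max x₀ t) * (min x₀ t - a) / (b - a) := by
    intro t ht
    apply div_nonneg _ hba.le
    apply mul_nonneg
    · rcases le_total x₀ t with h | h <;> simp [max_eq_right, max_eq_left, h] <;>
        [linarith [ht.2]; linarith [hx₀.2]]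
    · rcases le_total x₀ t with h | h <;> simp [min_eq_left, min_eq_right, h] <;>
        [linarith [hx₀.1]; linarith [ht.1]]
  have hGle : ∀ t ∈ Icc a b, (b - max x₀ t) * (min x₀ t - a) / (b - a) ≤ (b - a) / 4 := by
    intro t ht
    rw [div_le_div_iff₀ hba (by norm_num)]
    rcases le_total x₀ t with h | h
    · rw [max_eq_right h, min_eq_left h]
      nlinarith [sq_nonneg ((b - t) - (x₀ - a)), ht.2, hx₀.1, h]
    · rw [max_eq_left h, min_eq_right h]
      nlinarith [sq_nonneg ((b - x₀) - (t - a)), hx₀.2, ht.1, h]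
  -- continuity of integrand
  have hGcont : ContinuousOn (fun t => (b - max x₀ t) * (min x₀ t - a) / (b - a)) (Icc a b) := by
    exact (((continuous_const.sub (continuous_const.max continuous_id)).mul
      ((continuous_const.min continuous_id).sub continuous_const)).div_const _).continuousOn
  have hint1 : IntervalIntegrable
      (fun t => (b - max x₀ t) * (min x₀ t - a) / (b - a) * q t * u t) volume a b := by
    apply ContinuousOn.intervalIntegrable
    rw [uIcc_of_le hab']
    exact (hGcont.mul hq).mul hu
  have hintq : IntervalIntegrable (fun t => |q t|) volume a b := by
    apply ContinuousOn.intervalIntegrable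
    rw [uIcc_of_le hab']
    exact hq.abs
  have hint2 : IntervalIntegrable (fun t => (b - a) / 4 * M * |q t|) volume a b :=
    hintq.const_mul _
  -- main estimate
  have key : M ≤ (b - a) / 4 * M * ∫ t in a..b, |q t| := by
    calc M = |u x₀| := rfl
      _ = |∫ t in a..b, (b - max x₀ t) * (min x₀ t - a) / (b - a) * q t * u t| := by
          rw [heq x₀ hx₀]
      _ ≤ ∫ t in a..b, |(b - max x₀ t) * (min x₀ t - a) / (b - a) * q t * u t| :=
          intervalIntegral.abs_integral_le_integral_abs hab'
      _ ≤ ∫ t in a..b, (b - a) / 4 * M * |q t| := by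
          apply intervalIntegral.integral_mono_on hab' hint1.abs hint2
          intro t ht
          have h1 := hGnn t ht
          have h2 := hGle t ht
          have h3 : |u t| ≤ M := hmax ht
          rw [abs_mul, abs_mul, abs_of_nonneg h1]
          calc (b - max x₀ t) * (min x₀ t - a) / (b - a) * |q t| * |u t|
              ≤ (b - a) / 4 * |q t| * M := by
                apply mul_le_mul (mul_le_mul_of_nonneg_right h2 (abs_nonneg _)) h3
                  (abs_nonneg _) (by positivity)
            _ = (b - a) / 4 * M * |q t| := by ring
      _ = (b - a) / 4 * M * ∫ t in a..b, |q t| := by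
          rw [← intervalIntegral.integral_const_mul]
  rw [ge_iff_le, div_le_iff₀ hba]
  nlinarith [key, hMpos]
end

section
/- For α = 1, the Hartman–Wintner inequality reads: if the Dirichlet problem u'' + q u = 0, u(a) = u(b) = 0 (equivalently the Green's function integral equation) has a nontrivial continuous solution, then ∫_a^b (b-s)(s-a) q⁺(s) ds ≥ b - a. -/
open Real MeasureTheory Set

lemma hw_key (a b : ℝ) (hab : a < b) (q u : ℝ → ℝ)
    (hq : ContinuousOn q (Icc a b)) (hu : ContinuousOn u (Icc a b))
    (hnn : ∀ x ∈ Icc a b, 0 ≤ u x) (hpos : ∃ x ∈ Icc a b, 0 < u x)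
    (heq : ∀ x ∈ Icc a b,
      u x = ∫ t in a..b, (b - max x t) * (min x t - a) / (b - a) * q t * u t) :
    1 ≤ ∫ s in a..b, (b - s) * (s - a) / (b - a) * max (q s) 0 := by
  have huicc : uIcc a b = Icc a b := uIcc_of_le hab.le
  obtain ⟨c, hc, hmax⟩ := isCompact_Icc.exists_isMaxOn (nonempty_Icc.mpr hab.le) hu
  obtain ⟨x₀, hx₀, hx₀pos⟩ := hpos
  have hM : 0 < u c := lt_of_lt_of_le hx₀pos (hmax hx₀)
  have hba : (0:ℝ) < b - a := by linarith
  have hint1 : IntervalIntegrable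
      (fun t => (b - max c t) * (min c t - a) / (b - a) * q t * u t) volume a b := by
    apply ContinuousOn.intervalIntegrable
    rw [huicc]
    exact (((by fun_prop : Continuous fun t => (b - max c t) * (min c t - a) / (b - a)).continuousOn.mul hq).mul hu)
  have hint2 : IntervalIntegrable
      (fun t => (b - t) * (t - a) / (b - a) * max (q t) 0 * u c) volume a b := by
    apply ContinuousOn.intervalIntegrable
    rw [huicc]
    exact (((by fun_prop : Continuous fun t : ℝ => (b - t) * (t - a) / (b - a)).continuousOn.mul
      (fun x hx => (hq x hx).max continuousWithinAt_const)).mul continuousOn_const)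
  have h1 : u c ≤ ∫ t in a..b, (b - t) * (t - a) / (b - a) * max (q t) 0 * u c := by
    conv_lhs => rw [heq c hc]
    apply intervalIntegral.integral_mono_on hab.le hint1 hint2
    intro t ht
    have htu : u t ≤ u c := hmax ht
    have htu0 : 0 ≤ u t := hnn t ht
    have hK0 : 0 ≤ (b - max c t) * (min c t - a) / (b - a) := by
      apply div_nonneg _ hba.le
      apply mul_nonneg
      · rw [sub_nonneg, max_le_iff]; exact ⟨hc.2, ht.2⟩
      · rw [sub_nonneg, le_min_iff]; exact ⟨hc.1, ht.1⟩
    have hKle : (b - max c t) * (min c t - a) / (b - a) ≤ (b - t) * (t - a) / (b - a) := by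
      rw [div_le_div_iff_of_pos_right hba]
      rcases le_total t c with h | h
      · rw [max_eq_left h, min_eq_right h]
        nlinarith [ht.1, ht.2, hc.1, hc.2]
      · rw [max_eq_right h, min_eq_left h]
        nlinarith [ht.1, ht.2, hc.1, hc.2]
    rcases le_total (q t) 0 with hqt | hqt
    · have : max (q t) 0 = 0 := max_eq_right hqt
      rw [this]
      have hKu : 0 ≤ (b - max c t) * (min c t - a) / (b - a) * u t :=
        mul_nonneg hK0 htu0
      nlinarith [mul_nonneg hK0 htu0]
    · have hm : max (q t) 0 = q t := max_eq_left hqt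
      rw [hm]
      have h2 : 0 ≤ (b - t) * (t - a) / (b - a) := le_trans hK0 hKle
      nlinarith [mul_le_mul hKle (mul_le_mul_of_nonneg_left htu hqt)
        (mul_nonneg hqt htu0) h2]
  have h2 : (∫ t in a..b, (b - t) * (t - a) / (b - a) * max (q t) 0 * u c)
      = (∫ t in a..b, (b - t) * (t - a) / (b - a) * max (q t) 0) * u c := by
    exact intervalIntegral.integral_mul_const _ _
  rw [h2] at h1
  nlinarith [h1]

lemma hw_restrict (a b a' b' : ℝ) (hab : a < b) (ha : a ≤ a') (hb : b' ≤ b) (h' : a' < b')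
    (q u : ℝ → ℝ) (hq : ContinuousOn q (Icc a b)) (hu : ContinuousOn u (Icc a b))
    (ua' : u a' = 0) (ub' : u b' = 0)
    (heq : ∀ x ∈ Icc a b,
      u x = ∫ t in a..b, (b - max x t) * (min x t - a) / (b - a) * q t * u t) :
    ∀ x ∈ Icc a' b',
      u x = ∫ t in a'..b', (b' - max x t) * (min x t - a') / (b' - a') * q t * u t := by
  intro x hx
  have hxab : x ∈ Icc a b := ⟨ha.trans hx.1, hx.2.trans hb⟩
  have ha'ab : a' ∈ Icc a b := ⟨ha, h'.le.trans hb⟩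
  have hb'ab : b' ∈ Icc a b := ⟨ha.trans h'.le, hb⟩
  have hba : (0:ℝ) < b - a := by linarith
  have hba' : (0:ℝ) < b' - a' := by linarith
  have hbane : b - a ≠ 0 := hba.ne'
  have hbane' : b' - a' ≠ 0 := hba'.ne'
  set c1 : ℝ := (b' - x) / (b' - a') with hc1
  set c2 : ℝ := (x - a') / (b' - a') with hc2
  set F : ℝ → ℝ := fun t =>
    ((b - max x t) * (min x t - a) / (b - a)
      - c1 * ((b - max a' t) * (min a' t - a) / (b - a))
      - c2 * ((b - max b' t) * (min b' t - a) / (b - a))) * (q t * u t) with hF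
  have contK : ∀ y : ℝ, ContinuousOn (fun t => (b - max y t) * (min y t - a) / (b - a) * q t * u t) (Icc a b) := by
    intro y
    exact ((by fun_prop : Continuous fun t => (b - max y t) * (min y t - a) / (b - a)).continuousOn.mul hq).mul hu
  have intK : ∀ y : ℝ, IntervalIntegrable (fun t => (b - max y t) * (min y t - a) / (b - a) * q t * u t) volume a b := by
    intro y
    apply ContinuousOn.intervalIntegrable
    rw [uIcc_of_le hab.le]
    exact contK y
  have contF : ContinuousOn F (Icc a b) := by
    apply ContinuousOn.mul _ (hq.mul hu)
    fun_prop
  have intF : ∀ p r : ℝ, p ≤ r → a ≤ p → r ≤ b → IntervalIntegrable F volume p r := by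
    intro p r h1 h2 h3
    apply ContinuousOn.intervalIntegrable
    rw [uIcc_of_le h1]
    exact contF.mono (Icc_subset_Icc h2 h3)
  have key1 : u x = ∫ t in a..b, F t := by
    have e1 : ∫ t in a..b, F t
        = (∫ t in a..b, (b - max x t) * (min x t - a) / (b - a) * q t * u t)
          - c1 * (∫ t in a..b, (b - max a' t) * (min a' t - a) / (b - a) * q t * u t)
          - c2 * (∫ t in a..b, (b - max b' t) * (min b' t - a) / (b - a) * q t * u t) := by
      rw [← intervalIntegral.integral_const_mul, ← intervalIntegral.integral_const_mul,
        ← intervalIntegral.integral_sub (intK x) ((intK a').const_mul c1),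
        ← intervalIntegral.integral_sub (((intK x).sub ((intK a').const_mul c1))) ((intK b').const_mul c2)]
      apply intervalIntegral.integral_congr
      intro t _
      simp only [hF]
      ring
    rw [e1, ← heq x hxab, ← heq a' ha'ab, ← heq b' hb'ab, ua', ub']
    ring
  have key2 : ∫ t in a..b, F t = (∫ t in a..a', F t) + (∫ t in a'..b', F t) + (∫ t in b'..b, F t) := by
    rw [intervalIntegral.integral_add_adjacent_intervals (intF a a' ha le_rfl (h'.le.trans hb)) (intF a' b' h'.le ha hb),
      intervalIntegral.integral_add_adjacent_intervals (intF a b' (by linarith) le_rfl hb) (intF b' b hb (ha.trans h'.le) le_rfl)]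
  have key3 : (∫ t in a..a', F t) = 0 := by
    have : (∫ t in a..a', F t) = ∫ t in a..a', (0:ℝ) := by
      apply intervalIntegral.integral_congr
      intro t ht
      rw [uIcc_of_le ha] at ht
      have htx : t ≤ x := ht.2.trans hx.1
      have htb' : t ≤ b' := ht.2.trans h'.le
      simp only [hF, max_eq_left htx, min_eq_right htx, max_eq_left ht.2, min_eq_right ht.2,
        max_eq_left htb', min_eq_right htb', hc1, hc2]
      field_simp
      ring
    simp [this]
  have key4 : (∫ t in b'..b, F t) = 0 := by
    have : (∫ t in b'..b, F t) = ∫ t in b'..b, (0:ℝ) := by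
      apply intervalIntegral.integral_congr
      intro t ht
      rw [uIcc_of_le hb] at ht
      have htx : x ≤ t := hx.2.trans ht.1
      have hta' : a' ≤ t := h'.le.trans ht.1
      simp only [hF, max_eq_right htx, min_eq_left htx, max_eq_right hta', min_eq_left hta',
        max_eq_right ht.1, min_eq_left ht.1, hc1, hc2]
      field_simp
      ring
    simp [this]
  have key5 : (∫ t in a'..b', F t)
      = ∫ t in a'..b', (b' - max x t) * (min x t - a') / (b' - a') * q t * u t := by
    apply intervalIntegral.integral_congr
    intro t ht
    rw [uIcc_of_le h'.le] at ht
    have h1 : max a' t = t := max_eq_right ht.1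
    have h2 : min a' t = a' := min_eq_left ht.1
    have h3 : max b' t = b' := max_eq_left ht.2
    have h4 : min b' t = t := min_eq_right ht.2
    simp only [hF, h1, h2, h3, h4, hc1, hc2]
    rcases le_total t x with h5 | h5
    · rw [max_eq_left h5, min_eq_right h5]
      field_simp
      ring
    · rw [max_eq_right h5, min_eq_left h5]
      field_simp
      ring
  rw [key1, key2, key3, key4, key5]
  ring

lemma hw_main_pos (a b : ℝ) (hab : a < b)
    (q u : ℝ → ℝ) (hq : ContinuousOn q (Set.Icc a b)) (hu : ContinuousOn u (Set.Icc a b))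
    (hnt : ∃ x ∈ Set.Icc a b, 0 < u x)
    (heq : ∀ x ∈ Set.Icc a b,
      u x = ∫ t in a..b, (b - max x t) * (min x t - a) / (b - a) * q t * u t) :
    (∫ s in a..b, (b - s) * (s - a) * max (q s) 0) ≥ b - a := by
  obtain ⟨x₀, hx₀, hx₀pos⟩ := hnt
  have hba : (0:ℝ) < b - a := by linarith
  -- endpoint zeros
  have hua : u a = 0 := by
    rw [heq a ⟨le_rfl, hab.le⟩]
    have : (∫ t in a..b, (b - max a t) * (min a t - a) / (b - a) * q t * u t)
        = ∫ t in a..b, (0:ℝ) := by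
      apply intervalIntegral.integral_congr
      intro t ht
      rw [uIcc_of_le hab.le] at ht
      simp only [min_eq_left ht.1]
      ring
    rw [this]; simp
  have hub : u b = 0 := by
    rw [heq b ⟨hab.le, le_rfl⟩]
    have : (∫ t in a..b, (b - max b t) * (min b t - a) / (b - a) * q t * u t)
        = ∫ t in a..b, (0:ℝ) := by
      apply intervalIntegral.integral_congr
      intro t ht
      rw [uIcc_of_le hab.le] at ht
      simp only [max_eq_left ht.2]
      ring
    rw [this]; simp
  -- left consecutive zero
  set S : Set ℝ := Icc a x₀ ∩ u ⁻¹' {0} with hS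
  have hSclosed : IsClosed S :=
    (hu.mono (Icc_subset_Icc le_rfl hx₀.2)).preimage_isClosed_of_isClosed isClosed_Icc isClosed_singleton
  have hSne : a ∈ S := ⟨⟨le_rfl, hx₀.1⟩, hua⟩
  have hSbdd : BddAbove S := ⟨x₀, fun t ht => ht.1.2⟩
  set a' : ℝ := sSup S with ha'
  have ha'S : a' ∈ S := hSclosed.csSup_mem ⟨a, hSne⟩ hSbdd
  have hua' : u a' = 0 := ha'S.2
  have ha'x₀ : a' < x₀ := by
    rcases lt_or_eq_of_le ha'S.1.2 with h | h
    · exact h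
    · rw [h] at hua'; rw [hua'] at hx₀pos; exact absurd hx₀pos (lt_irrefl 0)
  have hneL : ∀ s ∈ Ioc a' x₀, u s ≠ 0 := by
    intro s hs h0
    have : s ≤ a' := le_csSup hSbdd ⟨⟨ha'S.1.1.trans hs.1.le, hs.2⟩, h0⟩
    exact absurd hs.1 (not_lt.mpr this)
  have hposL : ∀ t ∈ Ioc a' x₀, 0 < u t := by
    intro t ht
    by_contra hle
    push_neg at hle
    have hut : u t < 0 := lt_of_le_of_ne hle (hneL t ht)
    have hsub : Icc t x₀ ⊆ Icc a b :=
      Icc_subset_Icc (ha'S.1.1.trans ht.1.le) hx₀.2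
    obtain ⟨z, hz, hz0⟩ := intermediate_value_Icc ht.2 (hu.mono hsub)
      (⟨hut.le, hx₀pos.le⟩ : (0:ℝ) ∈ Icc (u t) (u x₀))
    exact hneL z ⟨lt_of_lt_of_le ht.1 hz.1, hz.2⟩ hz0
  -- right consecutive zero
  set T : Set ℝ := Icc x₀ b ∩ u ⁻¹' {0} with hT
  have hTclosed : IsClosed T :=
    (hu.mono (Icc_subset_Icc hx₀.1 le_rfl)).preimage_isClosed_of_isClosed isClosed_Icc isClosed_singleton
  have hTne : b ∈ T := ⟨⟨hx₀.2, le_rfl⟩, hub⟩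
  have hTbdd : BddBelow T := ⟨x₀, fun t ht => ht.1.1⟩
  set b' : ℝ := sInf T with hb'
  have hb'T : b' ∈ T := hTclosed.csInf_mem ⟨b, hTne⟩ hTbdd
  have hub' : u b' = 0 := hb'T.2
  have hx₀b' : x₀ < b' := by
    rcases lt_or_eq_of_le hb'T.1.1 with h | h
    · exact h
    · rw [← h] at hub'; rw [hub'] at hx₀pos; exact absurd hx₀pos (lt_irrefl 0)
  have hneR : ∀ s ∈ Ico x₀ b', u s ≠ 0 := by
    intro s hs h0
    have : b' ≤ s := csInf_le hTbdd ⟨⟨hs.1, hs.2.le.trans hb'T.1.2⟩, h0⟩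
    exact absurd hs.2 (not_lt.mpr this)
  have hposR : ∀ t ∈ Ico x₀ b', 0 < u t := by
    intro t ht
    by_contra hle
    push_neg at hle
    have hut : u t < 0 := lt_of_le_of_ne hle (hneR t ht)
    have hsub : Icc x₀ t ⊆ Icc a b :=
      Icc_subset_Icc hx₀.1 (ht.2.le.trans hb'T.1.2)
    obtain ⟨z, hz, hz0⟩ := intermediate_value_Icc' ht.1 (hu.mono hsub)
      (⟨hut.le, hx₀pos.le⟩ : (0:ℝ) ∈ Icc (u t) (u x₀))
    exact hneR z ⟨hz.1, lt_of_le_of_lt hz.2 ht.2⟩ hz0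
  -- set up subinterval
  have haa' : a ≤ a' := ha'S.1.1
  have hb'b : b' ≤ b := hb'T.1.2
  have h' : a' < b' := ha'x₀.trans hx₀b'
  have hba' : (0:ℝ) < b' - a' := by linarith
  have hnn : ∀ t ∈ Icc a' b', 0 ≤ u t := by
    intro t ht
    rcases eq_or_lt_of_le ht.1 with h1 | h1
    · rw [← h1, hua']
    rcases le_or_gt t x₀ with h2 | h2
    · exact (hposL t ⟨h1, h2⟩).le
    rcases eq_or_lt_of_le ht.2 with h3 | h3
    · rw [h3, hub']
    · exact (hposR t ⟨h2.le, h3⟩).le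
  have hpos' : ∃ x ∈ Icc a' b', 0 < u x := ⟨x₀, ⟨ha'x₀.le, hx₀b'.le⟩, hx₀pos⟩
  have hsub : Icc a' b' ⊆ Icc a b := Icc_subset_Icc haa' hb'b
  have heq' := hw_restrict a b a' b' hab haa' hb'b h' q u hq hu hua' hub' heq
  have hkey := hw_key a' b' h' q u (hq.mono hsub) (hu.mono hsub) hnn hpos' heq'
  -- comparison of kernels
  have hcont_g : ContinuousOn (fun s => (b - s) * (s - a) / (b - a) * max (q s) 0) (Icc a b) := by
    exact (by fun_prop : Continuous fun s : ℝ => (b - s) * (s - a) / (b - a)).continuousOn.mul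
      (fun x hx => (hq x hx).max continuousWithinAt_const)
  have hint_g : ∀ p r : ℝ, p ≤ r → a ≤ p → r ≤ b →
      IntervalIntegrable (fun s => (b - s) * (s - a) / (b - a) * max (q s) 0) volume p r := by
    intro p r h1 h2 h3
    apply ContinuousOn.intervalIntegrable
    rw [uIcc_of_le h1]
    exact hcont_g.mono (Icc_subset_Icc h2 h3)
  have hint_g' : IntervalIntegrable (fun s => (b' - s) * (s - a') / (b' - a') * max (q s) 0) volume a' b' := by
    apply ContinuousOn.intervalIntegrable
    rw [uIcc_of_le h'.le]
    exact (by fun_prop : Continuous fun s : ℝ => (b' - s) * (s - a') / (b' - a')).continuousOn.mul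
      (fun x hx => ((hq.mono hsub) x hx).max continuousWithinAt_const)
  have cmp1 : (∫ s in a'..b', (b' - s) * (s - a') / (b' - a') * max (q s) 0)
      ≤ ∫ s in a'..b', (b - s) * (s - a) / (b - a) * max (q s) 0 := by
    apply intervalIntegral.integral_mono_on h'.le hint_g' (hint_g a' b' h'.le haa' hb'b)
    intro s hs
    apply mul_le_mul_of_nonneg_right _ (le_max_right _ 0)
    rw [div_le_div_iff₀ hba' hba]
    nlinarith [mul_nonneg (sub_nonneg.mpr (hs.2.trans hb'b)) (sub_nonneg.mpr (haa'.trans hs.1)),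
      mul_nonneg (sub_nonneg.mpr haa') (sub_nonneg.mpr hs.2),
      mul_nonneg (sub_nonneg.mpr hb'b) (sub_nonneg.mpr hs.1),
      mul_nonneg (mul_nonneg (sub_nonneg.mpr haa') (sub_nonneg.mpr hs.2)) (sub_nonneg.mpr hs.1),
      mul_nonneg (mul_nonneg (sub_nonneg.mpr hb'b) (sub_nonneg.mpr hs.1)) (sub_nonneg.mpr hs.2),
      mul_nonneg (mul_nonneg (sub_nonneg.mpr hb'b) (sub_nonneg.mpr hs.1)) (sub_nonneg.mpr (haa'.trans hs.1)),
      mul_nonneg (mul_nonneg (sub_nonneg.mpr haa') (sub_nonneg.mpr hs.2)) (sub_nonneg.mpr (hs.2.trans hb'b))]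
  have gnn : ∀ p r : ℝ, a ≤ p → r ≤ b → p ≤ r →
      0 ≤ ∫ s in p..r, (b - s) * (s - a) / (b - a) * max (q s) 0 := by
    intro p r h2 h3 h1
    apply intervalIntegral.integral_nonneg h1
    intro s hs
    apply mul_nonneg _ (le_max_right _ 0)
    apply div_nonneg _ hba.le
    apply mul_nonneg <;> [skip; skip] <;>
      · rw [sub_nonneg]; first | exact hs.2.trans h3 | exact h2.trans hs.1
  have cmp2 : (∫ s in a'..b', (b - s) * (s - a) / (b - a) * max (q s) 0)
      ≤ ∫ s in a..b, (b - s) * (s - a) / (b - a) * max (q s) 0 := by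
    have e : (∫ s in a..b, (b - s) * (s - a) / (b - a) * max (q s) 0)
        = (∫ s in a..a', (b - s) * (s - a) / (b - a) * max (q s) 0)
          + (∫ s in a'..b', (b - s) * (s - a) / (b - a) * max (q s) 0)
          + (∫ s in b'..b, (b - s) * (s - a) / (b - a) * max (q s) 0) := by
      rw [intervalIntegral.integral_add_adjacent_intervals (hint_g a a' haa' le_rfl (h'.le.trans hb'b))
        (hint_g a' b' h'.le haa' hb'b),
        intervalIntegral.integral_add_adjacent_intervals (hint_g a b' (by linarith) le_rfl hb'b)
        (hint_g b' b hb'b (by linarith) le_rfl)]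
    rw [e]
    have n1 := gnn a a' le_rfl (by linarith) haa'
    have n2 := gnn b' b (by linarith) le_rfl hb'b
    linarith
  -- conclude
  have h1 : (1:ℝ) ≤ ∫ s in a..b, (b - s) * (s - a) / (b - a) * max (q s) 0 :=
    le_trans hkey (le_trans cmp1 cmp2)
  have e2 : (∫ s in a..b, (b - s) * (s - a) * max (q s) 0)
      = (b - a) * ∫ s in a..b, (b - s) * (s - a) / (b - a) * max (q s) 0 := by
    rw [← intervalIntegral.integral_const_mul]
    apply intervalIntegral.integral_congr
    intro t _
    field_simp
  rw [ge_iff_le, e2]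
  nlinarith [h1]

/-- classical Hartman–Wintner inequality. -/
theorem hartman_wintner_classical (a b : ℝ) (hab : a < b)
    (q u : ℝ → ℝ) (hq : ContinuousOn q (Set.Icc a b)) (hu : ContinuousOn u (Set.Icc a b))
    (hnt : ∃ x ∈ Set.Icc a b, u x ≠ 0)
    (heq : ∀ x ∈ Set.Icc a b,
      u x = ∫ t in a..b, (b - max x t) * (min x t - a) / (b - a) * q t * u t) :
    (∫ s in a..b, (b - s) * (s - a) * max (q s) 0) ≥ b - a := by
  obtain ⟨x₀, hx₀, hne⟩ := hnt
  rcases lt_or_gt_of_ne hne with hneg | hpos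
  · apply hw_main_pos a b hab q (fun t => -u t) hq hu.neg
      ⟨x₀, hx₀, by simpa using hneg⟩
    intro x hx
    show -u x = _
    rw [heq x hx, ← intervalIntegral.integral_neg]
    apply intervalIntegral.integral_congr
    intro t _
    show -((b - max x t) * (min x t - a) / (b - a) * q t * u t) = _
    ring
  · exact hw_main_pos a b hab q u hq hu ⟨x₀, hx₀, hpos⟩ heq
end
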